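/- For every λ ∈ (−1/2, 0) ∪ (0, ∞) and every integer m ≥ 1, ‖C_{2m}^{(λ+1)}‖₂² − ‖C_0^{(λ+1)}‖₂² = Σ_{j=1}^{m} ((2j+λ)/(2λ²))·([C_{2j}^{(λ)}(1)]² + (2λ−1)·‖C_{2j}^{(λ)}‖₂²). -/

import Mathlib

open Real MeasureTheory Finset

/-- Gegenbauer polynomials `C_n^{(λ)}`: `C_0 = 1`, `C_1 = 2λx`, and
`n C_n(x) = 2(n+λ-1) x C_{n-1}(x) - (n+2λ-2) C_{n-2}(x)` for `n ≥ 2`. -/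
noncomputable def gegenbauer (lam : ℝ) : ℕ → ℝ → ℝ
  | 0, _ => 1
  | 1, x => 2 * lam * x
  | n + 2, x =>
      (2 * ((n : ℝ) + 1 + lam) * x * gegenbauer lam (n + 1) x
        - ((n : ℝ) + 2 * lam) * gegenbauer lam n x) / ((n : ℝ) + 2)

lemma geg_rec (lam : ℝ) (n : ℕ) (x : ℝ) :
    ((n:ℝ)+2) * gegenbauer lam (n+2) x
      = 2*((n:ℝ)+1+lam)*x*gegenbauer lam (n+1) x - ((n:ℝ)+2*lam)*gegenbauer lam n x := by
  have hne : ((n:ℝ)+2) ≠ 0 := by positivity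
  rw [show gegenbauer lam (n+2) x
      = (2*((n:ℝ)+1+lam)*x*gegenbauer lam (n+1) x - ((n:ℝ)+2*lam)*gegenbauer lam n x)/((n:ℝ)+2)
      from rfl, mul_div_cancel₀ _ hne]

lemma geg_cont (lam : ℝ) : ∀ n : ℕ, Continuous (gegenbauer lam n) := by
  intro n
  induction n using Nat.twoStepInduction with
  | zero => simpa [gegenbauer] using continuous_const
  | one =>
      have : gegenbauer lam 1 = fun x => 2*lam*x := rfl
      rw [this]; fun_prop
  | more n ih0 ih1 =>
      have : gegenbauer lam (n+2) = fun x =>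
        (2 * ((n : ℝ) + 1 + lam) * x * gegenbauer lam (n + 1) x
        - ((n : ℝ) + 2 * lam) * gegenbauer lam n x) / ((n : ℝ) + 2) := rfl
      rw [this]
      fun_prop

lemma geg_F (lam : ℝ) : ∀ (n : ℕ) (x : ℝ),
    gegenbauer lam (n+2) x
      = gegenbauer (lam+1) (n+2) x - 2*x*gegenbauer (lam+1) (n+1) x + gegenbauer (lam+1) n x := by
  intro n
  induction n using Nat.twoStepInduction with
  | zero => intro x; simp [gegenbauer]; ring
  | one => intro x; simp [gegenbauer]; ring
  | more n ih0 ih1 =>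
      intro x
      have rg := geg_rec lam (n+2) x
      have rh2 := geg_rec (lam+1) (n+2) x
      have rh1 := geg_rec (lam+1) (n+1) x
      have rh0 := geg_rec (lam+1) n x
      have i1 := ih1 x
      have i0 := ih0 x
      push_cast at rg rh2 rh1 rh0
      have hne : ((n:ℝ)+2+2) ≠ 0 := by positivity
      refine mul_left_cancel₀ hne ?_
      linear_combination rg + 2*((n:ℝ)+3+lam)*x*i1 - ((n:ℝ)+2+2*lam)*i0 - rh2 + 2*x*rh1 - rh0

lemma geg_A (lam : ℝ) : ∀ (n : ℕ) (x : ℝ),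
    ((n:ℝ)+2+lam) * gegenbauer lam (n+2) x
      = lam * (gegenbauer (lam+1) (n+2) x - gegenbauer (lam+1) n x) := by
  intro n
  induction n using Nat.twoStepInduction with
  | zero => intro x; simp [gegenbauer]; ring
  | one => intro x; simp [gegenbauer]; ring
  | more n ih0 ih1 =>
      intro x
      have rg := geg_rec lam (n+2) x
      have rh2 := geg_rec (lam+1) (n+2) x
      have hF := geg_F lam n x
      have i1 := ih1 x
      have i0 := ih0 x
      push_cast at rg rh2 i1 i0 ⊢
      have hne : ((n:ℝ)+2+2) ≠ 0 := by positivity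
      refine mul_left_cancel₀ hne ?_
      linear_combination ((n:ℝ)+4+lam)*rg + 2*((n:ℝ)+4+lam)*x*i1 - ((n:ℝ)+4+lam)*i0
        - lam*rh2 - lam*((n:ℝ)+4+lam)*hF

lemma geg_deriv (lam : ℝ) : ∀ (n : ℕ) (x : ℝ),
    HasDerivAt (gegenbauer lam (n+1)) (2*lam*gegenbauer (lam+1) n x) x := by
  intro n
  induction n using Nat.twoStepInduction with
  | zero =>
      intro x
      have hfun : gegenbauer lam 1 = fun y => 2*lam*y := rfl
      rw [hfun]
      have : HasDerivAt (fun y : ℝ => 2*lam*y) (2*lam*1) x := (hasDerivAt_id x).const_mul (2*lam)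
      simpa [gegenbauer] using this
  | one =>
      intro x
      have hfun : gegenbauer lam 2 = fun y => 2*lam*(1+lam)*y^2 - lam := by
        funext y; simp [gegenbauer]; ring
      rw [hfun]
      have h : HasDerivAt (fun y : ℝ => 2*lam*(1+lam)*y^2 - lam)
          (2*lam*(1+lam)*(2*x^1)) x := ((hasDerivAt_pow 2 x).const_mul (2*lam*(1+lam))).sub_const lam
      convert h using 1
      simp [gegenbauer]; ring
  | more n ih0 ih1 =>
      intro x
      have d1 := ih1 x
      have d0 := ih0 x
      have hA := geg_A lam n x
      have rh0 := geg_rec (lam+1) n x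
      have hfun : gegenbauer lam (n+2+1) = fun y =>
          (2*(((n+1:ℕ):ℝ)+1+lam)*y*gegenbauer lam (n+2) y
            - (((n+1:ℕ):ℝ)+2*lam)*gegenbauer lam (n+1) y)/(((n+1:ℕ):ℝ)+2) := rfl
      rw [hfun]
      have h1 : HasDerivAt (fun y => 2*(((n+1:ℕ):ℝ)+1+lam)*y*gegenbauer lam (n+2) y)
          (2*(((n+1:ℕ):ℝ)+1+lam)*(1*gegenbauer lam (n+2) x
              + x*(2*lam*gegenbauer (lam+1) (n+1) x))) x := by
        have h := ((hasDerivAt_id x).mul d1).const_mul (2*(((n+1:ℕ):ℝ)+1+lam))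
        simp only [id_eq, ← mul_assoc] at h
        refine (h.congr_deriv (Eq.symm ?_)).congr_of_eventuallyEq
          (Filter.Eventually.of_forall fun y => by simp only [Pi.mul_apply, id_eq]; ring)
        ring
      have h2 := d0.const_mul ((((n+1:ℕ):ℝ)+2*lam))
      have h3 := (h1.sub h2).div_const (((n+1:ℕ):ℝ)+2)
      refine h3.congr_deriv (Eq.symm ?_)
      have hne : (((n+1:ℕ):ℝ)+2) ≠ 0 := by positivity
      rw [eq_div_iff hne]
      push_cast
      linear_combination 2*lam*rh0 - 2*hA

lemma geg_G (lam : ℝ) (n : ℕ) (x : ℝ) :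
    lam^2 * ((gegenbauer (lam+1) (n+2) x)^2 - (gegenbauer (lam+1) n x)^2)
      = ((n:ℝ)+2+lam) * (2*lam*(x * gegenbauer lam (n+2) x * gegenbauer (lam+1) (n+1) x)
          + lam * (gegenbauer lam (n+2) x)^2) := by
  have hA := geg_A lam n x
  have hF := geg_F lam n x
  linear_combination
    (-(lam*(2*x*gegenbauer (lam+1) (n+1) x + gegenbauer lam (n+2) x)))*hA
      - (lam^2*(gegenbauer (lam+1) (n+2) x - gegenbauer (lam+1) n x))*hF

lemma geg_step (lam : ℝ) (hlam : lam ≠ 0) (n : ℕ) :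
    (∫ x in (0:ℝ)..1, (gegenbauer (lam+1) (n+2) x)^2)
      - (∫ x in (0:ℝ)..1, (gegenbauer (lam+1) n x)^2)
    = (((n:ℝ)+2+lam)/(2*lam^2))
        * ((gegenbauer lam (n+2) 1)^2
            + (2*lam-1)*(∫ x in (0:ℝ)..1, (gegenbauer lam (n+2) x)^2)) := by
  have cg := geg_cont lam (n+2)
  have cc := geg_cont (lam+1) (n+1)
  have ca2 := geg_cont (lam+1) (n+2)
  have ca0 := geg_cont (lam+1) n
  -- interval integrabilities
  have ig2 : IntervalIntegrable (fun x => (gegenbauer lam (n+2) x)^2) MeasureTheory.volume 0 1 :=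
    (cg.pow 2).intervalIntegrable 0 1
  have igc : IntervalIntegrable (fun x => x * gegenbauer lam (n+2) x * gegenbauer (lam+1) (n+1) x)
      MeasureTheory.volume 0 1 := ((continuous_id.mul cg).mul cc).intervalIntegrable 0 1
  have ia2 : IntervalIntegrable (fun x => (gegenbauer (lam+1) (n+2) x)^2) MeasureTheory.volume 0 1 :=
    (ca2.pow 2).intervalIntegrable 0 1
  have ia0 : IntervalIntegrable (fun x => (gegenbauer (lam+1) n x)^2) MeasureTheory.volume 0 1 :=
    (ca0.pow 2).intervalIntegrable 0 1
  set J := ∫ x in (0:ℝ)..1, (gegenbauer lam (n+2) x)^2 with hJ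
  set K := ∫ x in (0:ℝ)..1, x * gegenbauer lam (n+2) x * gegenbauer (lam+1) (n+1) x with hK
  -- FTC : J + 4 lam K = g(1)^2
  have ftc : J + 4*lam*K = (gegenbauer lam (n+2) 1)^2 := by
    have hd : ∀ x ∈ Set.uIcc (0:ℝ) 1,
        HasDerivAt (fun y => y * (gegenbauer lam (n+2) y)^2)
          ((gegenbauer lam (n+2) x)^2
            + 4*lam*(x * gegenbauer lam (n+2) x * gegenbauer (lam+1) (n+1) x)) x := by
      intro x _
      have hg := geg_deriv lam (n+1) x
      have h := (hasDerivAt_id x).mul (hg.pow 2)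
      simp only [id_eq, one_mul] at h
      refine h.congr_deriv (Eq.symm ?_)
      push_cast
      simp only [Pi.pow_apply]
      ring
    have hint : IntervalIntegrable (fun x => (gegenbauer lam (n+2) x)^2
        + 4*lam*(x * gegenbauer lam (n+2) x * gegenbauer (lam+1) (n+1) x))
        MeasureTheory.volume 0 1 := ig2.add (igc.const_mul (4*lam))
    have := intervalIntegral.integral_eq_sub_of_hasDerivAt hd hint
    rw [intervalIntegral.integral_add ig2 (by simpa using igc.const_mul (4*lam))] at this
    rw [intervalIntegral.integral_const_mul] at this
    simpa using this
  -- integrated G identity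
  have hG : lam^2 * ((∫ x in (0:ℝ)..1, (gegenbauer (lam+1) (n+2) x)^2)
        - (∫ x in (0:ℝ)..1, (gegenbauer (lam+1) n x)^2))
      = ((n:ℝ)+2+lam) * (2*lam*K + lam*J) := by
    have h1 : lam^2 * ((∫ x in (0:ℝ)..1, (gegenbauer (lam+1) (n+2) x)^2)
          - (∫ x in (0:ℝ)..1, (gegenbauer (lam+1) n x)^2))
        = ∫ x in (0:ℝ)..1, lam^2 * ((gegenbauer (lam+1) (n+2) x)^2 - (gegenbauer (lam+1) n x)^2) := by
      rw [intervalIntegral.integral_const_mul, intervalIntegral.integral_sub ia2 ia0]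
    have h2 : (∫ x in (0:ℝ)..1, lam^2 * ((gegenbauer (lam+1) (n+2) x)^2 - (gegenbauer (lam+1) n x)^2))
        = ∫ x in (0:ℝ)..1, ((n:ℝ)+2+lam) * (2*lam*(x * gegenbauer lam (n+2) x * gegenbauer (lam+1) (n+1) x)
            + lam * (gegenbauer lam (n+2) x)^2) := by
      apply intervalIntegral.integral_congr
      intro x _
      exact geg_G lam n x
    have h3 : (∫ x in (0:ℝ)..1, ((n:ℝ)+2+lam) * (2*lam*(x * gegenbauer lam (n+2) x * gegenbauer (lam+1) (n+1) x)
            + lam * (gegenbauer lam (n+2) x)^2))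
        = ((n:ℝ)+2+lam) * (2*lam*K + lam*J) := by
      rw [intervalIntegral.integral_const_mul,
        intervalIntegral.integral_add (by simpa using igc.const_mul (2*lam)) (by simpa using ig2.const_mul lam),
        intervalIntegral.integral_const_mul, intervalIntegral.integral_const_mul]
    rw [h1, h2, h3]
  -- finish by algebra
  have hl2 : lam^2 ≠ 0 := pow_ne_zero 2 hlam
  field_simp
  linear_combination 2*hG + ((n:ℝ)+2+lam)*ftc

theorem gegenbauer_telescoping_even (lam : ℝ)
    (hlam : lam ∈ Set.Ioo (-(1/2) : ℝ) 0 ∪ Set.Ioi (0 : ℝ)) (m : ℕ) (hm : 1 ≤ m) :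
    (∫ x in (0:ℝ)..1, (gegenbauer (lam + 1) (2 * m) x) ^ 2)
      - (∫ x in (0:ℝ)..1, (gegenbauer (lam + 1) 0 x) ^ 2) =
    ∑ j ∈ Finset.Icc 1 m,
      ((2 * (j : ℝ) + lam) / (2 * lam ^ 2))
        * ((gegenbauer lam (2 * j) 1) ^ 2
            + (2 * lam - 1) * (∫ x in (0:ℝ)..1, (gegenbauer lam (2 * j) x) ^ 2)) := by
  have hne : lam ≠ 0 := by
    rcases hlam with h | h
    · exact ne_of_lt h.2
    · exact ne_of_gt h
  set f : ℕ → ℝ := fun i => ∫ x in (0:ℝ)..1, (gegenbauer (lam + 1) (2 * i) x) ^ 2 with hf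
  have hstep : ∀ i : ℕ,
      ((2 * ((i:ℝ)+1) + lam) / (2 * lam ^ 2))
        * ((gegenbauer lam (2 * (i+1)) 1) ^ 2
            + (2 * lam - 1) * (∫ x in (0:ℝ)..1, (gegenbauer lam (2 * (i+1)) x) ^ 2))
      = f (i+1) - f i := by
    intro i
    have h := geg_step lam hne (2*i)
    have hidx : 2 * (i+1) = 2*i + 2 := by ring
    simp only [hf]
    rw [hidx, h]
    push_cast
    ring
  rw [← Finset.Ico_add_one_right_eq_Icc, Finset.sum_Ico_eq_sum_range]
  have hmm : m + 1 - 1 = m := by omega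
  rw [hmm]
  have hsum : ∑ i ∈ Finset.range m,
      ((2 * ((1 + i : ℕ) : ℝ) + lam) / (2 * lam ^ 2))
        * ((gegenbauer lam (2 * (1 + i)) 1) ^ 2
            + (2 * lam - 1) * (∫ x in (0:ℝ)..1, (gegenbauer lam (2 * (1 + i)) x) ^ 2))
      = ∑ i ∈ Finset.range m, (f (i+1) - f i) := by
    apply Finset.sum_congr rfl
    intro i _
    rw [add_comm 1 i]
    push_cast
    exact hstep i
  rw [hsum, Finset.sum_range_sub f m]
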